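/- Triangle condition at the origin: Let A, B ∈ V be adjacent vertices with h(A) = h(B) = m ≥ 1, where h is the height. Then there exists C ∈ V adjacent to both A and B with h(C) = m − 1. -/

import Mathlib

open Finset

/-- The vertex set of the 1-skeleton of the Ã_n Coxeter complex:
integer vectors summing to zero with all pairwise coordinate differences divisible by n+1. -/
def inV (n : ℕ) (x : Fin (n+1) → ℤ) : Prop :=
  (∑ i, x i = 0) ∧ ∀ i j, ((n : ℤ) + 1) ∣ x i - x j

/-- Maximum coordinate. -/
def maxC (n : ℕ) (x : Fin (n+1) → ℤ) : ℤ := univ.sup' univ_nonempty x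

/-- Minimum coordinate. -/
def minC (n : ℕ) (x : Fin (n+1) → ℤ) : ℤ := univ.inf' univ_nonempty x

/-- An edge vector: coordinates sum to 0, pairwise differences divisible by n+1,
and max minus min equals n+1. -/
def isEdge (n : ℕ) (e : Fin (n+1) → ℤ) : Prop :=
  inV n e ∧ maxC n e - minC n e = (n : ℤ) + 1

/-- Height of a vertex: (max − min)/(n+1). -/
def height (n : ℕ) (x : Fin (n+1) → ℤ) : ℤ :=
  (maxC n x - minC n x) / ((n : ℤ) + 1)

/-- The edge vector associated to a subset S: value n+1−|S| on S and −|S| off S. -/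
def eVec (n : ℕ) (S : Finset (Fin (n+1))) : Fin (n+1) → ℤ :=
  fun i => if i ∈ S then (n : ℤ) + 1 - S.card else -(S.card : ℤ)

lemma inV_zero (n : ℕ) : inV n 0 := ⟨by simp, fun i j => by simp⟩

lemma maxC_neg (n : ℕ) (x : Fin (n+1) → ℤ) : maxC n (-x) = - minC n x := by
  unfold maxC minC
  apply le_antisymm
  · apply Finset.sup'_le
    intro i hi
    have h1 : univ.inf' univ_nonempty x ≤ x i := Finset.inf'_le _ hi
    have h2 : (-x) i = -(x i) := rfl
    omega
  · obtain ⟨i, hi, h⟩ := Finset.exists_mem_eq_inf' (univ_nonempty) x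
    rw [h]
    have h1 : (-x) i ≤ univ.sup' univ_nonempty (-x) := Finset.le_sup' (-x) hi
    have h2 : (-x) i = -(x i) := rfl
    omega

lemma minC_neg (n : ℕ) (x : Fin (n+1) → ℤ) : minC n (-x) = - maxC n x := by
  have := maxC_neg n (-x)
  rw [neg_neg] at this
  unfold maxC minC at *
  omega

lemma isEdge_neg {n : ℕ} {e : Fin (n+1) → ℤ} (h : isEdge n e) : isEdge n (-e) := by
  obtain ⟨⟨h1, h2⟩, h3⟩ := h
  refine ⟨⟨by simp [h1], fun i j => by
    have h' : (-e) i - (-e) j = e j - e i := by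
      simp only [Pi.neg_apply]; ring
    rw [h']; exact h2 j i⟩, ?_⟩
  rw [maxC_neg, minC_neg]
  omega

/-- The graph G on V with edge-vector adjacency. -/
def G (n : ℕ) : SimpleGraph {x : Fin (n+1) → ℤ // inV n x} where
  Adj x y := isEdge n (y.1 - x.1)
  symm := by
    constructor
    intro x y h
    have := isEdge_neg h
    rwa [neg_sub] at this
  loopless := by
    constructor
    intro x h
    obtain ⟨-, h3⟩ := h
    rw [sub_self] at h3
    simp [maxC, minC] at h3
    omega

/-!
Write `B = A + eVec n S`. A neighbour `A + eVec n T` of `A` has height `h(A) - 1` as soon as `T`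
contains every coordinate where `A` is minimal and none where it is maximal: the coordinates of `A`
are congruent mod `n + 1`, so the others lie at least `n + 1` away from both extremes. Since
`h(B) = h(A)`, either `S` meets the argmax of `A` and contains its argmin, and `T = S \ argmax`
works, or `S` avoids the argmax and misses part of the argmin, and `T = S ∪ argmin` works. In both
cases `S` and `T` are nested, so `eVec n T - eVec n S = ± eVec n (S ∆ T)` is an edge.
-/

variable {n : ℕ}

section Extrema

variable {x : Fin (n+1) → ℤ}

lemma le_maxC (x : Fin (n+1) → ℤ) (i : Fin (n+1)) : x i ≤ maxC n x :=
  le_sup' x (mem_univ i)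

lemma minC_le (x : Fin (n+1) → ℤ) (i : Fin (n+1)) : minC n x ≤ x i :=
  inf'_le x (mem_univ i)

lemma exists_maxC (x : Fin (n+1) → ℤ) : ∃ i, x i = maxC n x := by
  obtain ⟨i, -, h⟩ := exists_mem_eq_sup' univ_nonempty x
  exact ⟨i, h.symm⟩

lemma exists_minC (x : Fin (n+1) → ℤ) : ∃ i, x i = minC n x := by
  obtain ⟨i, -, h⟩ := exists_mem_eq_inf' univ_nonempty x
  exact ⟨i, h.symm⟩

lemma maxC_eq_of_forall_le {a : ℤ} (h : ∀ i, x i ≤ a) (p : Fin (n+1)) (hp : x p = a) :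
    maxC n x = a :=
  le_antisymm (sup'_le _ _ fun i _ => h i) (hp ▸ le_maxC x p)

lemma minC_eq_of_forall_ge {a : ℤ} (h : ∀ i, a ≤ x i) (q : Fin (n+1)) (hq : x q = a) :
    minC n x = a :=
  le_antisymm (hq ▸ minC_le x q) (le_inf' _ _ fun i _ => h i)

variable (hx : ∀ i j, ((n : ℤ) + 1) ∣ x i - x j)
include hx

lemma le_maxC_sub_of_ne {i : Fin (n+1)} (hi : x i ≠ maxC n x) :
    x i ≤ maxC n x - ((n : ℤ) + 1) := by
  obtain ⟨p, hp⟩ := exists_maxC x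
  have := Int.le_of_dvd (by have := le_maxC x i; omega) (hp ▸ hx p i)
  omega

lemma minC_add_le_of_ne {i : Fin (n+1)} (hi : x i ≠ minC n x) :
    minC n x + ((n : ℤ) + 1) ≤ x i := by
  obtain ⟨q, hq⟩ := exists_minC x
  have := Int.le_of_dvd (by have := minC_le x i; omega) (hq ▸ hx i q)
  omega

lemma maxC_sub_minC_eq_height_mul : maxC n x - minC n x = height n x * ((n : ℤ) + 1) := by
  obtain ⟨p, hp⟩ := exists_maxC x
  obtain ⟨q, hq⟩ := exists_minC x
  exact (Int.ediv_mul_cancel (hp ▸ hq ▸ hx p q)).symm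

end Extrema

lemma height_eq_of_maxC_sub_minC {x : Fin (n+1) → ℤ} {k : ℤ}
    (h : maxC n x - minC n x = k * ((n : ℤ) + 1)) : height n x = k := by
  rw [height, h, Int.mul_ediv_cancel _ (by positivity)]

lemma inV_add {x y : Fin (n+1) → ℤ} (hx : inV n x) (hy : inV n y) : inV n (x + y) := by
  refine ⟨by simp [sum_add_distrib, hx.1, hy.1], fun i j => ?_⟩
  simpa [add_sub_add_comm] using dvd_add (hx.2 i j) (hy.2 i j)

section EdgeVector

variable {S T : Finset (Fin (n+1))}

lemma eVec_eq_indicator (S : Finset (Fin (n+1))) :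
    eVec n S = fun i => ((n : ℤ) + 1) * (if i ∈ S then 1 else 0) - S.card := by
  funext i
  by_cases hi : i ∈ S <;> simp [eVec, hi]

lemma inV_eVec (S : Finset (Fin (n+1))) : inV n (eVec n S) := by
  refine ⟨?_, fun i j => ?_⟩
  · simp [eVec_eq_indicator, sum_sub_distrib]
    ring
  · unfold eVec
    split_ifs
    · simp
    · exact ⟨1, by ring⟩
    · exact ⟨-1, by ring⟩
    · simp

lemma isEdge_eVec (hS : S.Nonempty) (hS' : S ≠ univ) : isEdge n (eVec n S) := by
  obtain ⟨p, hp⟩ := hS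
  obtain ⟨q, hq⟩ : ∃ q, q ∉ S := by simpa [eq_univ_iff_forall] using hS'
  refine ⟨inV_eVec S, ?_⟩
  rw [maxC_eq_of_forall_le (a := (n : ℤ) + 1 - S.card) (fun i => ?_) p (by simp [eVec, hp]),
    minC_eq_of_forall_ge (a := -(S.card : ℤ)) (fun i => ?_) q (by simp [eVec, hq])]
  · ring
  all_goals unfold eVec; split_ifs <;> omega

lemma eVec_sub_eVec (hTS : T ⊆ S) : eVec n S - eVec n T = eVec n (S \ T) := by
  have hcard : ((S \ T).card : ℤ) = S.card - T.card := by
    rw [card_sdiff_of_subset hTS, Nat.cast_sub (card_le_card hTS)]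
  funext i
  by_cases hT : i ∈ T
  · simp [eVec, hT, hTS hT, hcard]
  · by_cases hS : i ∈ S <;> simp [eVec, hS, hT, hcard] <;> ring

lemma isEdge_eVec_sub_eVec (hTS : T ⊂ S) (hT : T.Nonempty) :
    isEdge n (eVec n S - eVec n T) := by
  rw [eVec_sub_eVec hTS.subset]
  obtain ⟨t, ht⟩ := hT
  exact isEdge_eVec (sdiff_nonempty.2 hTS.not_subset)
    fun h => (mem_sdiff.1 (h ▸ mem_univ t)).2 ht

lemma exists_eq_eVec_of_isEdge {e : Fin (n+1) → ℤ} (he : isEdge n e) :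
    ∃ S : Finset (Fin (n+1)), S.Nonempty ∧ S ≠ univ ∧ e = eVec n S := by
  obtain ⟨⟨hsum, hdvd⟩, hspan⟩ := he
  obtain ⟨p, hp⟩ := exists_maxC e
  obtain ⟨q, hq⟩ := exists_minC e
  set μ := minC n e
  let S := univ.filter fun i => e i ≠ μ
  -- all coordinates are congruent and lie in [μ, μ + n + 1]
  have he : ∀ i, e i = μ + ((n : ℤ) + 1) * if i ∈ S then 1 else 0 := by
    intro i
    by_cases hi : e i = μ
    · simp [S, hi]
    · have := Int.le_of_dvd (by have := minC_le e i; omega) (hq ▸ hdvd i q)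
      have := le_maxC e i
      simp [S, hi]
      omega
  have hμ : μ = -S.card := by
    have : ∑ i, e i = ((n : ℤ) + 1) * (μ + S.card) := by
      simp only [he, sum_add_distrib, ← mul_sum, sum_const, card_univ, Fintype.card_fin,
        sum_boole, nsmul_eq_mul]
      simp [S]
      ring
    rw [hsum] at this
    have := (mul_eq_zero.1 this.symm).resolve_left (by positivity)
    omega
  refine ⟨S, ⟨p, by simp [S]; omega⟩, fun h => ?_, ?_⟩
  · have := he q
    simp [h] at this
    omega
  · funext i
    rw [he i, eVec_eq_indicator, hμ]
    ring

end EdgeVector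

section AddEVec

variable {x : Fin (n+1) → ℤ} {S : Finset (Fin (n+1))}

lemma maxC_add_eVec_of_mem {p : Fin (n+1)} (hp : x p = maxC n x) (hpS : p ∈ S) :
    maxC n (x + eVec n S) = maxC n x + ((n : ℤ) + 1) - S.card := by
  refine maxC_eq_of_forall_le (fun i => ?_) p (by simp [eVec, hpS, hp]; ring)
  have := le_maxC x i
  simp only [Pi.add_apply, eVec]
  split_ifs <;> omega

lemma minC_add_eVec_of_notMem {q : Fin (n+1)} (hq : x q = minC n x) (hqS : q ∉ S) :
    minC n (x + eVec n S) = minC n x - S.card := by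
  refine minC_eq_of_forall_ge (fun i => ?_) q (by simp [eVec, hqS, hq]; ring)
  have := minC_le x i
  simp only [Pi.add_apply, eVec]
  split_ifs <;> omega

lemma isEdge_eVec_of_forall_ne (hmax : ∀ i ∈ S, x i ≠ maxC n x)
    (hmin : ∀ i ∉ S, x i ≠ minC n x) : isEdge n (eVec n S) := by
  obtain ⟨p, hp⟩ := exists_maxC x
  obtain ⟨q, hq⟩ := exists_minC x
  exact isEdge_eVec ⟨q, by_contra fun h => hmin q h hq⟩
    fun h => hmax p (h ▸ mem_univ p) hp

variable (hx : ∀ i j, ((n : ℤ) + 1) ∣ x i - x j)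
include hx

lemma maxC_add_eVec_of_forall_ne (hS : ∀ i ∈ S, x i ≠ maxC n x) :
    maxC n (x + eVec n S) = maxC n x - S.card := by
  obtain ⟨p, hp⟩ := exists_maxC x
  have hpS : p ∉ S := fun h => hS p h hp
  refine maxC_eq_of_forall_le (fun i => ?_) p (by simp [eVec, hpS, hp]; ring)
  simp only [Pi.add_apply, eVec]
  split_ifs with hi
  · have := le_maxC_sub_of_ne hx (hS i hi)
    omega
  · have := le_maxC x i
    omega

lemma minC_add_eVec_of_forall_ne (hS : ∀ i ∉ S, x i ≠ minC n x) :
    minC n (x + eVec n S) = minC n x + ((n : ℤ) + 1) - S.card := by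
  obtain ⟨q, hq⟩ := exists_minC x
  have hqS : q ∈ S := by_contra fun h => hS q h hq
  refine minC_eq_of_forall_ge (fun i => ?_) q (by simp [eVec, hqS, hq]; ring)
  simp only [Pi.add_apply, eVec]
  split_ifs with hi
  · have := minC_le x i
    omega
  · have := minC_add_le_of_ne hx (hS i hi)
    omega

lemma height_add_eVec_of_forall_ne (hmax : ∀ i ∈ S, x i ≠ maxC n x)
    (hmin : ∀ i ∉ S, x i ≠ minC n x) :
    height n (x + eVec n S) = height n x - 1 := by
  apply height_eq_of_maxC_sub_minC
  rw [maxC_add_eVec_of_forall_ne hx hmax, minC_add_eVec_of_forall_ne hx hmin, sub_one_mul,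
    ← maxC_sub_minC_eq_height_mul hx]
  ring

lemma exists_separating_adjacent_of_height_add_eVec_eq (hx0 : 0 < height n x)
    (hS : S.Nonempty) (hxS : height n (x + eVec n S) = height n x) :
    ∃ T : Finset (Fin (n+1)), (∀ i ∈ T, x i ≠ maxC n x) ∧ (∀ i ∉ T, x i ≠ minC n x) ∧
      isEdge n (eVec n T - eVec n S) := by
  have hspan := maxC_sub_minC_eq_height_mul hx
  have hmin_ne_max : ∀ i, x i = minC n x → x i ≠ maxC n x := fun i h h' => by nlinarith
  by_cases hP : ∃ p ∈ S, x p = maxC n x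
  · obtain ⟨p, hpS, hp⟩ := hP
    have hmin : ∀ i ∉ S, x i ≠ minC n x := fun q hqS hq => by
      have := height_eq_of_maxC_sub_minC (k := height n x + 1) (x := x + eVec n S)
        (by rw [maxC_add_eVec_of_mem hp hpS, minC_add_eVec_of_notMem hq hqS]; linarith)
      omega
    have hminT : ∀ i, x i = minC n x → i ∈ S.filter fun i => x i ≠ maxC n x := fun i hi =>
      mem_filter.2 ⟨by_contra fun h => hmin i h hi, hmin_ne_max i hi⟩
    obtain ⟨q, hq⟩ := exists_minC x
    refine ⟨S.filter fun i => x i ≠ maxC n x, fun i hi => (mem_filter.1 hi).2,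
      fun i hi hiq => hi (hminT i hiq), ?_⟩
    simpa using isEdge_neg (isEdge_eVec_sub_eVec
      ⟨filter_subset _ S, fun h => absurd hp (mem_filter.1 (h hpS)).2⟩ ⟨q, hminT q hq⟩)
  · push Not at hP
    obtain ⟨q, hqS, hq⟩ : ∃ q ∉ S, x q = minC n x := by
      by_contra! h
      have := height_add_eVec_of_forall_ne hx hP h
      omega
    have hminT : ∀ i, x i = minC n x → i ∈ S ∪ univ.filter fun i => x i = minC n x :=
      fun i hi => mem_union_right _ (mem_filter.2 ⟨mem_univ i, hi⟩)
    refine ⟨S ∪ univ.filter fun i => x i = minC n x, fun i hi => ?_,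
      fun i hi hiq => hi (hminT i hiq),
      isEdge_eVec_sub_eVec ⟨subset_union_left, fun h => hqS (h (hminT q hq))⟩ hS⟩
    rcases mem_union.1 hi with hiS | hiq
    · exact hP i hiS
    · exact hmin_ne_max i (mem_filter.1 hiq).2

end AddEVec

theorem stmt8_general (n : ℕ) (m : ℕ) (hm : 1 ≤ m)
    (A B : Fin (n+1) → ℤ) (hA : inV n A)
    (hAB : isEdge n (B - A))
    (hhA : height n A = (m : ℤ)) (hhB : height n B = (m : ℤ)) :
    ∃ C : Fin (n+1) → ℤ, inV n C ∧ isEdge n (C - A) ∧ isEdge n (C - B) ∧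
      height n C = (m : ℤ) - 1 := by
  obtain ⟨S, hS, -, hBA⟩ := exists_eq_eVec_of_isEdge hAB
  obtain rfl : B = A + eVec n S := by rw [← hBA]; abel
  obtain ⟨T, hmax, hmin, hTS⟩ :=
    exists_separating_adjacent_of_height_add_eVec_eq hA.2 (by omega) hS (hhB.trans hhA.symm)
  refine ⟨A + eVec n T, inV_add hA (inV_eVec T), ?_, ?_, ?_⟩
  · simpa using isEdge_eVec_of_forall_ne hmax hmin
  · simpa using hTS
  · rw [height_add_eVec_of_forall_ne hA.2 hmax hmin, hhA]

/-- triangle condition at the origin. -/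
theorem stmt8 (n : ℕ) (hn : 1 ≤ n) (m : ℕ) (hm : 1 ≤ m)
    (A B : Fin (n+1) → ℤ) (hA : inV n A) (hB : inV n B)
    (hAB : isEdge n (B - A))
    (hhA : height n A = (m : ℤ)) (hhB : height n B = (m : ℤ)) :
    ∃ C : Fin (n+1) → ℤ, inV n C ∧ isEdge n (C - A) ∧ isEdge n (C - B) ∧
      height n C = (m : ℤ) - 1 :=
  stmt8_general n m hm A B hA hAB hhA hhB
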